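/- arXiv:1905.04449 — 5 statements merged into one kernel-verified Lean document; each statement's English description precedes it below -/
import Mathlib

section
/- Let A be an n1 × n2 × n3 complex tensor and B be an n2 × n4 × n3 complex tensor, and let C = A ∗ B be their t-product. Then for every k, the k-th frontal slice of the mode-3 DFT of C equals the matrix product of the k-th frontal slices of the mode-3 DFTs of A and B: C̄^(k) = Ā^(k) · B̄^(k). -/
open Matrix
open scoped BigOperators ComplexConjugate

noncomputable section

/-- Circular convolution of two vectors of length `n`, indexed by `ZMod n`. -/
def cconv {n : ℕ} [NeZero n] (a b : ZMod n → ℂ) : ZMod n → ℂ :=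
  fun k => ∑ t : ZMod n, a t * b (k - t)

/-- Unnormalized discrete Fourier transform with ω = exp(-2πi/n):
`dft x k = ∑ t, x t * ω ^ (k*t)`. -/
def dft {n : ℕ} [NeZero n] (x : ZMod n → ℂ) : ZMod n → ℂ :=
  fun k => ∑ t : ZMod n, x t * Complex.exp (-(2 * Real.pi * Complex.I) / n) ^ (k * t).val

/-- A third-order complex tensor of size n1 × n2 × n3 (third index taken modulo n3). -/
abbrev Tensor (n1 n2 n3 : ℕ) := Fin n1 → Fin n2 → ZMod n3 → ℂ

/-- The t-product: the (i,j)-th mode-3 tube of `A ∗ B` is `∑ k, A(i,k,·) ⋆ B(k,j,·)`. -/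
def tProd {n1 n2 n4 n3 : ℕ} [NeZero n3] (A : Tensor n1 n2 n3) (B : Tensor n2 n4 n3) :
    Tensor n1 n4 n3 :=
  fun i j => ∑ k : Fin n2, cconv (A i k) (B k j)

/-- Mode-3 DFT: apply the DFT to every mode-3 tube. -/
def mdft {n1 n2 n3 : ℕ} [NeZero n3] (X : Tensor n1 n2 n3) : Tensor n1 n2 n3 :=
  fun i j => dft (X i j)

/-- The k-th frontal fslice of a tensor, as a matrix. -/
def fslice {n1 n2 n3 : ℕ} (X : Tensor n1 n2 n3) (k : ZMod n3) : Matrix (Fin n1) (Fin n2) ℂ :=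
  Matrix.of fun i j => X i j k

/-- Conjugate transpose of a tensor: conjugate-transpose each frontal fslice and reverse
the order of the transposed slices 2 through n3, i.e. `Xᴴ(i,j,t) = conj (X j i (-t))`. -/
def tconj {n1 n2 n3 : ℕ} (X : Tensor n1 n2 n3) : Tensor n2 n1 n3 :=
  fun i j t => (starRingEnd ℂ) (X j i (-t))

/-- The identity tensor: first frontal fslice is the identity matrix, others are zero. -/
def tId (n n3 : ℕ) : Tensor n n n3 :=
  fun i j t => if t = 0 ∧ i = j then 1 else 0

/-- A tensor `Q` is orthogonal if `Q ∗ Qᴴ = Qᴴ ∗ Q = I`. -/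
def TOrthogonal {n n3 : ℕ} [NeZero n3] (Q : Tensor n n n3) : Prop :=
  tProd Q (tconj Q) = tId n n3 ∧ tProd (tconj Q) Q = tId n n3

/-- A tensor is f-diagonal if each of its frontal slices is a diagonal matrix. -/
def FDiagonal {n1 n2 n3 : ℕ} (S : Tensor n1 n2 n3) : Prop :=
  ∀ (i : Fin n1) (j : Fin n2) (k : ZMod n3), (i : ℕ) ≠ (j : ℕ) → S i j k = 0

/-- Frobenius norm of a tensor. -/
def frob {n1 n2 n3 : ℕ} [NeZero n3] (X : Tensor n1 n2 n3) : ℝ :=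
  Real.sqrt (∑ i : Fin n1, ∑ j : Fin n2, ∑ t : ZMod n3, ‖X i j t‖ ^ 2)

/-- Frobenius norm of a matrix. -/
def frobM {m n : ℕ} (M : Matrix (Fin m) (Fin n) ℂ) : ℝ :=
  Real.sqrt (∑ i : Fin m, ∑ j : Fin n, ‖M i j‖ ^ 2)

/-- Nuclear norm of a matrix: the sum of its singular values,
i.e. of the square roots of the eigenvalues of `Mᴴ * M`. -/
def nuclearNorm {m n : ℕ} (M : Matrix (Fin m) (Fin n) ℂ) : ℝ :=
  ∑ j : Fin n, Real.sqrt ((Matrix.isHermitian_conjTranspose_mul_self M).eigenvalues j)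

/-- The tensor nuclear norm: sum of the nuclear norms of the Fourier-domain frontal slices. -/
def tnn {n1 n2 n3 : ℕ} [NeZero n3] (X : Tensor n1 n2 n3) : ℝ :=
  ∑ k : ZMod n3, nuclearNorm (fslice (mdft X) k)


theorem Complex.exp_neg_two_pi_I_div_pow_self (n : ℕ) :
    Complex.exp (-(2 * Real.pi * Complex.I) / n) ^ n = 1 := by
  rcases Nat.eq_zero_or_pos n with rfl | hn
  · exact pow_zero _
  · rw [neg_div, Complex.exp_neg]
    exact ((Complex.isPrimitiveRoot_exp n hn.ne').inv).pow_eq_one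

/-- The DFT kernel `t ↦ ω ^ t.val` is an additive character of `ZMod n`; this is what turns
circular convolution into pointwise multiplication. -/
def dftChar (n : ℕ) [NeZero n] : AddChar (ZMod n) ℂ :=
  AddChar.zmodChar n (Complex.exp_neg_two_pi_I_div_pow_self n)

theorem dft_apply {n : ℕ} [NeZero n] (x : ZMod n → ℂ) (k : ZMod n) :
    dft x k = ∑ t : ZMod n, x t * dftChar n (k * t) := by
  simp only [dft, dftChar, AddChar.zmodChar_apply]

theorem dft_sum {ι : Type*} {n : ℕ} [NeZero n] (s : Finset ι) (x : ι → ZMod n → ℂ) :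
    dft (∑ i ∈ s, x i) = ∑ i ∈ s, dft (x i) := by
  ext k
  simp only [dft, Finset.sum_apply, Finset.sum_mul]
  exact Finset.sum_comm

theorem dft_cconv {n : ℕ} [NeZero n] (a b : ZMod n → ℂ) :
    dft (cconv a b) = dft a * dft b := by
  ext k
  simp only [dft_apply, cconv, Pi.mul_apply]
  rw [Fintype.sum_mul_sum]
  simp only [Finset.sum_mul]
  rw [Finset.sum_comm]
  refine Finset.sum_congr rfl fun s _ => ?_
  -- substitute `t = u + s`, so that `ω ^ (k t) = ω ^ (k s) * ω ^ (k u)`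
  rw [← Equiv.sum_comp (Equiv.addRight s)]
  refine Finset.sum_congr rfl fun u _ => ?_
  rw [Equiv.coe_addRight, add_sub_cancel_right, mul_add, AddChar.map_add_eq_mul]
  ring

/-- the mode-3 DFT of a t-product has frontal slices equal to the matrix
products of the corresponding Fourier-domain frontal slices of the factors. -/
theorem fslice_mdft_tProd {n1 n2 n4 n3 : ℕ} [NeZero n3]
    (A : Tensor n1 n2 n3) (B : Tensor n2 n4 n3) (k : ZMod n3) :
    fslice (mdft (tProd A B)) k = fslice (mdft A) k * fslice (mdft B) k := by
  ext i j
  simp only [fslice, mdft, tProd, Matrix.of_apply, Matrix.mul_apply, dft_sum, dft_cconv,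
    Finset.sum_apply, Pi.mul_apply]

end
end

section
/- For an n1 × n2 × n3 complex tensor X, the frontal slices of the mode-3 DFT of the conjugate transpose X^H are the conjugate transposes of the corresponding frontal slices of the mode-3 DFT of X: for every k, the k-th frontal slice of (X^H)‾ equals (X̄^(k))^H (the conjugate transpose of the k-th frontal slice of X̄). Consequently, for tensors A, B of compatible sizes, (A ∗ B)^H = B^H ∗ A^H. -/
open Matrix
open scoped BigOperators ComplexConjugate

noncomputable section

/-! The DFT kernel `ω = exp(-2πi/n)` lies on the unit circle and satisfies `ω ^ n = 1`, so
`conj (ω ^ m) = ω ^ (-m)` for `m : ZMod n`. Hence reversing and conjugating a tube conjugates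
its DFT, which gives the statement on Fourier-domain slices. For the t-product, reversing and
conjugating a circular convolution `a ⋆ b` yields the convolution of the reversed conjugates in
the opposite order (substitute `s ↦ s + t` in the convolution sum); summing over the inner index
gives `(A ∗ B)ᴴ = Bᴴ ∗ Aᴴ`. -/

open Real

theorem pow_zmod_val_add {M : Type*} [Monoid M] {n : ℕ} [NeZero n] {ω : M} (hω : ω ^ n = 1)
    (a b : ZMod n) : ω ^ (a + b).val = ω ^ a.val * ω ^ b.val := by
  rw [ZMod.val_add, ← pow_eq_pow_mod _ hω, pow_add]

theorem pow_zmod_val_neg {M : Type*} [DivisionMonoid M] {n : ℕ} [NeZero n] {ω : M}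
    (hω : ω ^ n = 1) (a : ZMod n) : ω ^ (-a).val = (ω ^ a.val)⁻¹ :=
  eq_inv_of_mul_eq_one_left <| by
    rw [← pow_zmod_val_add hω, neg_add_cancel, ZMod.val_zero, pow_zero]

namespace Complex

theorem exp_neg_two_pi_I_div_pow_self_s4 (n : ℕ) [NeZero n] :
    exp (-(2 * π * I) / n) ^ n = 1 := by
  rw [neg_div, exp_neg, inv_pow, (isPrimitiveRoot_exp n (NeZero.ne n)).pow_eq_one, inv_one]

theorem conj_exp_neg_two_pi_I_div (n : ℕ) :
    conj (exp (-(2 * π * I) / n)) = (exp (-(2 * π * I) / n))⁻¹ := by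
  rw [← exp_conj, ← exp_neg, map_div₀, map_neg, map_mul, map_mul, conj_I, conj_ofReal,
    map_natCast, map_ofNat, mul_neg, neg_neg, neg_div, neg_neg]

theorem conj_exp_neg_two_pi_I_div_pow_val {n : ℕ} [NeZero n] (a : ZMod n) :
    conj (exp (-(2 * π * I) / n) ^ a.val) = exp (-(2 * π * I) / n) ^ (-a).val := by
  rw [map_pow, conj_exp_neg_two_pi_I_div, inv_pow,
    pow_zmod_val_neg (exp_neg_two_pi_I_div_pow_self_s4 n)]

end Complex

def tubeConj {n : ℕ} (x : ZMod n → ℂ) : ZMod n → ℂ :=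
  fun t => conj (x (-t))

theorem tconj_apply {n1 n2 n3 : ℕ} (X : Tensor n1 n2 n3) (i : Fin n2) (j : Fin n1) :
    tconj X i j = tubeConj (X j i) :=
  rfl

theorem tubeConj_sum {ι : Type*} {n : ℕ} (s : Finset ι) (x : ι → ZMod n → ℂ) :
    tubeConj (∑ i ∈ s, x i) = ∑ i ∈ s, tubeConj (x i) := by
  funext t
  simp only [tubeConj, Finset.sum_apply, map_sum]

theorem dft_tubeConj {n : ℕ} [NeZero n] (x : ZMod n → ℂ) (k : ZMod n) :
    dft (tubeConj x) k = conj (dft x k) := by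
  simp only [dft, tubeConj, map_sum, map_mul]
  refine Fintype.sum_equiv (Equiv.neg _) _ _ fun t => ?_
  rw [Equiv.neg_apply, mul_neg, Complex.conj_exp_neg_two_pi_I_div_pow_val, neg_neg]

theorem tubeConj_cconv {n : ℕ} [NeZero n] (a b : ZMod n → ℂ) :
    tubeConj (cconv a b) = cconv (tubeConj b) (tubeConj a) := by
  funext t
  simp only [tubeConj, cconv, map_sum, map_mul]
  refine Fintype.sum_equiv (Equiv.addRight t) _ _ fun s => ?_
  rw [Equiv.coe_addRight, show -(s + t) = -t - s by ring, show -(t - (s + t)) = s by ring,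
    mul_comm]

/-- Fourier-domain frontal slices of the conjugate transpose tensor are the
conjugate transposes of the Fourier-domain frontal slices; consequently
`(A ∗ B)ᴴ = Bᴴ ∗ Aᴴ`. -/
theorem tconj_fourier_and_tProd {n1 n2 n4 n3 : ℕ} [NeZero n3] :
    (∀ (X : Tensor n1 n2 n3) (k : ZMod n3),
        fslice (mdft (tconj X)) k = (fslice (mdft X) k)ᴴ) ∧
    (∀ (A : Tensor n1 n2 n3) (B : Tensor n2 n4 n3),
        tconj (tProd A B) = tProd (tconj B) (tconj A)) := by
  refine ⟨fun X k => ?_, fun A B => ?_⟩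
  · ext i j
    exact dft_tubeConj (X j i) k
  · funext i j
    simp only [tconj_apply, tProd, tubeConj_sum, tubeConj_cconv]
end
end

section
/- Multiplication by an orthogonal tensor preserves the Frobenius norm: if Q ∈ ℂ^{n1×n1×n3} is orthogonal, then for every n1 × n2 × n3 tensor X, ‖Q ∗ X‖_F = ‖X‖_F. -/
open Matrix
open scoped BigOperators ComplexConjugate

noncomputable section

/-!
Unfolding the frontal slices into the columns of a matrix turns `Q ∗ X` into the matrix product
`bcirc Q * tUnfold X` with the block-circulant matrix of `Q`, and `bcirc` carries t-products,
conjugate transposes and the identity tensor to matrix products, conjugate transposes and the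
identity matrix. So an orthogonal `Q` has an isometric `bcirc Q`, and left multiplication by an
isometry preserves the Frobenius norm, `‖M‖_F² = tr (Mᴴ M)`.
-/

section FrobeniusInvariance

variable {𝕜 l m n : Type*} [RCLike 𝕜] [Fintype l] [Fintype m] [Fintype n]

theorem Matrix.ofReal_sum_norm_sq_eq_trace (M : Matrix m n 𝕜) :
    ((∑ i, ∑ j, ‖M i j‖ ^ 2 : ℝ) : 𝕜) = (Mᴴ * M).trace := by
  simp only [trace, diag_apply, mul_apply, conjTranspose_apply, RCLike.star_def, RCLike.conj_mul,
    RCLike.ofReal_sum, RCLike.ofReal_pow]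
  exact Finset.sum_comm

theorem Matrix.sum_norm_sq_mul_of_conjTranspose_mul_self_eq_one [DecidableEq m] {U : Matrix l m 𝕜}
    (hU : Uᴴ * U = 1) (M : Matrix m n 𝕜) :
    ∑ i, ∑ j, ‖(U * M) i j‖ ^ 2 = ∑ i, ∑ j, ‖M i j‖ ^ 2 := by
  apply RCLike.ofReal_injective (K := 𝕜)
  rw [ofReal_sum_norm_sq_eq_trace, ofReal_sum_norm_sq_eq_trace, conjTranspose_mul,
    Matrix.mul_assoc, ← Matrix.mul_assoc Uᴴ, hU, Matrix.one_mul]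

end FrobeniusInvariance

section BlockCirculant

variable {n1 n2 n3 n4 : ℕ}

/-- The paper's block-circulant matrix, with rows and columns indexed by (index, slice) rather
than (slice, index). -/
def bcirc (A : Tensor n1 n2 n3) : Matrix (Fin n1 × ZMod n3) (Fin n2 × ZMod n3) ℂ :=
  Matrix.of fun p q => A p.1 q.1 (p.2 - q.2)

def tUnfold (X : Tensor n1 n2 n3) : Matrix (Fin n1 × ZMod n3) (Fin n2) ℂ :=
  Matrix.of fun p j => X p.1 j p.2

theorem bcirc_tconj (A : Tensor n1 n2 n3) : bcirc (tconj A) = (bcirc A)ᴴ := by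
  ext ⟨i, s⟩ ⟨j, t⟩
  simp [bcirc, tconj]

theorem bcirc_tId : bcirc (tId n1 n3) = 1 := by
  ext ⟨i, s⟩ ⟨j, t⟩
  simp [bcirc, tId, one_apply, sub_eq_zero, and_comm]

variable [NeZero n3]

theorem tUnfold_tProd (A : Tensor n1 n2 n3) (B : Tensor n2 n4 n3) :
    tUnfold (tProd A B) = bcirc A * tUnfold B := by
  ext ⟨i, s⟩ j
  simp only [tUnfold, bcirc, tProd, cconv, of_apply, mul_apply, Fintype.sum_prod_type,
    Finset.sum_apply]
  refine Finset.sum_congr rfl fun k _ => ?_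
  exact Fintype.sum_equiv (Equiv.subLeft s) _ _ fun u => by simp

theorem bcirc_tProd (A : Tensor n1 n2 n3) (B : Tensor n2 n4 n3) :
    bcirc (tProd A B) = bcirc A * bcirc B := by
  ext ⟨i, s⟩ ⟨j, t⟩
  simp only [bcirc, tProd, cconv, of_apply, mul_apply, Fintype.sum_prod_type, Finset.sum_apply]
  refine Finset.sum_congr rfl fun k _ => ?_
  exact Fintype.sum_equiv (Equiv.subLeft s) _ _ fun u => by simp [sub_right_comm]

theorem TOrthogonal.conjTranspose_bcirc_mul_bcirc {Q : Tensor n1 n1 n3} (hQ : TOrthogonal Q) :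
    (bcirc Q)ᴴ * bcirc Q = 1 := by
  rw [← bcirc_tconj, ← bcirc_tProd, hQ.2, bcirc_tId]

theorem frob_eq_sqrt_sum_tUnfold (X : Tensor n1 n2 n3) :
    frob X = √(∑ p, ∑ j, ‖tUnfold X p j‖ ^ 2) := by
  simp only [frob, tUnfold, of_apply, Fintype.sum_prod_type]
  congr 1
  exact Finset.sum_congr rfl fun i _ => Finset.sum_comm

end BlockCirculant

/-- multiplication by an orthogonal tensor preserves the Frobenius norm. -/
theorem frob_tProd_orthogonal {n1 n2 n3 : ℕ} [NeZero n3]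
    (Q : Tensor n1 n1 n3) (hQ : TOrthogonal Q) (X : Tensor n1 n2 n3) :
    frob (tProd Q X) = frob X := by
  rw [frob_eq_sqrt_sum_tUnfold, frob_eq_sqrt_sum_tUnfold, tUnfold_tProd,
    sum_norm_sq_mul_of_conjTranspose_mul_self_eq_one hQ.conjTranspose_bcirc_mul_bcirc]

end
end

section
/- (Matrix singular value thresholding) Let A ∈ ℂ^{m×n} have singular value decomposition A = U Σ V^H with singular values σ_1, …, σ_r, and let τ > 0. Then the matrix Y* = U D V^H, where D is the diagonal matrix with entries D_ii = max(σ_i − τ, 0), is a global minimizer of the function Y ↦ ‖Y‖_* + (1/(2τ))·‖Y − A‖_F² over ℂ^{m×n}. -/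
open Matrix
open scoped BigOperators ComplexConjugate

noncomputable section

/-!
Both terms of the objective are invariant under `Y ↦ Uᴴ * Y * V`, so one may assume `A = Sg` is
rectangular diagonal. For every `Z`, the nuclear norm dominates `∑ᵢ |Zᵢᵢ|` (expand `Z = (Z W) Wᴴ`
in an orthonormal eigenbasis `W` of `Zᴴ Z` and apply Cauchy–Schwarz column by column), and
`‖Z - Sg‖_F²` dominates `∑ᵢ |Zᵢᵢ - σᵢ|²`. Both bounds are equalities for the diagonal matrix `D`,
so the problem splits into the scalar problems `min_z |z| + |z - σᵢ|² / (2τ)`, which soft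
thresholding `z = max (σᵢ - τ) 0` solves.
-/

theorem Finset.sum_mul_le_sqrt_mul_sqrt_of_injOn {ι κ : Type*} [Fintype ι] [Fintype κ]
    {P : Finset (ι × κ)} (hP₁ : Set.InjOn Prod.fst (P : Set (ι × κ)))
    (hP₂ : Set.InjOn Prod.snd (P : Set (ι × κ))) (f : ι → ℝ) (g : κ → ℝ) :
    ∑ p ∈ P, f p.1 * g p.2 ≤ √(∑ i, f i ^ 2) * √(∑ j, g j ^ 2) := by
  classical
  have hf : ∑ p ∈ P, f p.1 ^ 2 ≤ ∑ i, f i ^ 2 :=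
    (sum_image hP₁).symm.trans_le (sum_le_univ_sum_of_nonneg fun _ => sq_nonneg _)
  have hg : ∑ p ∈ P, g p.2 ^ 2 ≤ ∑ j, g j ^ 2 :=
    (sum_image hP₂).symm.trans_le (sum_le_univ_sum_of_nonneg fun _ => sq_nonneg _)
  exact (Real.sum_mul_le_sqrt_mul_sqrt P _ _).trans
    (mul_le_mul (Real.sqrt_le_sqrt hf) (Real.sqrt_le_sqrt hg) (Real.sqrt_nonneg _)
      (Real.sqrt_nonneg _))

theorem Fintype.sum_sq_eq_sq_sum_of_support_subsingleton {ι R : Type*} [Fintype ι]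
    [CommSemiring R] {f : ι → R} (hf : (Function.support f).Subsingleton) :
    ∑ i, f i ^ 2 = (∑ i, f i) ^ 2 := by
  rcases hf.eq_empty_or_singleton with h | ⟨i, hi⟩
  · simp [Function.support_eq_empty_iff.mp h]
  · have hzero : ∀ j ≠ i, f j = 0 := fun j hj =>
      Function.notMem_support.mp (by rw [hi]; exact hj)
    rw [Fintype.sum_eq_single i hzero, Fintype.sum_eq_single i fun j hj => by simp [hzero j hj]]

namespace Matrix

theorem re_conjTranspose_mul_self_apply_self {m n : Type*} [Fintype m] (M : Matrix m n ℂ)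
    (j : n) : ((Mᴴ * M) j j).re = ∑ i, ‖M i j‖ ^ 2 := by
  simp [mul_apply, Complex.re_sum, ← Complex.normSq_eq_conj_mul_self, Complex.sq_norm]

theorem conjTranspose_mul_self_unitary_mul_mul_conjTranspose {m n : Type*} [Fintype m]
    [Fintype n] [DecidableEq m] (M : Matrix m n ℂ) {U : Matrix m m ℂ} (hU : U ∈ unitaryGroup m ℂ)
    (V : Matrix n n ℂ) :
    (U * M * Vᴴ)ᴴ * (U * M * Vᴴ) = V * (Mᴴ * M) * Vᴴ := by
  have hUU : Uᴴ * U = 1 := mem_unitaryGroup_iff'.mp hU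
  simp only [conjTranspose_mul, conjTranspose_conjTranspose, Matrix.mul_assoc]
  rw [← Matrix.mul_assoc Uᴴ, hUU, Matrix.one_mul]

variable {n : Type*} [Fintype n] [DecidableEq n]

theorem charpoly_unitary_mul_mul_conjTranspose (X : Matrix n n ℂ) {V : Matrix n n ℂ}
    (hV : V ∈ unitaryGroup n ℂ) :
    (V * X * Vᴴ).charpoly = X.charpoly := by
  rw [Matrix.mul_assoc, charpoly_mul_comm, Matrix.mul_assoc, ← star_eq_conjTranspose,
    mem_unitaryGroup_iff'.mp hV, Matrix.mul_one]

open Polynomial in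
theorem IsHermitian.sum_comp_eigenvalues_of_eq_diagonal {A : Matrix n n ℂ}
    (hA : A.IsHermitian) {d : n → ℝ} (hAd : A = diagonal fun j => (d j : ℂ)) (g : ℝ → ℝ) :
    ∑ j, g (hA.eigenvalues j) = ∑ j, g (d j) := by
  have hchar : A.charpoly =
      (((Finset.univ.val.map d).map ((↑) : ℝ → ℂ)).map fun a => X - C a).prod := by
    rw [hAd, charpoly_diagonal, Multiset.map_map, Multiset.map_map, Finset.prod_map_val]; rfl
  have hroots := hA.roots_charpoly_eq_eigenvalues
  rw [hchar, roots_multiset_prod_X_sub_C, ← Multiset.map_map _ hA.eigenvalues] at hroots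
  have heig : Finset.univ.val.map hA.eigenvalues = Finset.univ.val.map d :=
    (Multiset.map_injective Complex.ofReal_injective hroots).symm
  have := congrArg (fun s => (s.map g).sum) heig
  simpa only [Multiset.map_map, Function.comp_def, Finset.sum_map_val] using this

end Matrix

section

variable {m n : ℕ}

theorem frobM_sq (M : Matrix (Fin m) (Fin n) ℂ) :
    frobM M ^ 2 = ∑ p : Fin m × Fin n, ‖M p.1 p.2‖ ^ 2 := by
  rw [frobM, Real.sq_sqrt (by positivity), Fintype.sum_prod_type]

theorem frobM_eq_sqrt_re_trace (M : Matrix (Fin m) (Fin n) ℂ) :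
    frobM M = √(Mᴴ * M).trace.re := by
  simp only [frobM, trace, diag_apply, Complex.re_sum, re_conjTranspose_mul_self_apply_self]
  rw [Finset.sum_comm]

variable {U : Matrix (Fin m) (Fin m) ℂ} {V : Matrix (Fin n) (Fin n) ℂ}

theorem frobM_unitary_mul_mul_conjTranspose (M : Matrix (Fin m) (Fin n) ℂ)
    (hU : U ∈ unitaryGroup (Fin m) ℂ) (hV : V ∈ unitaryGroup (Fin n) ℂ) :
    frobM (U * M * Vᴴ) = frobM M := by
  rw [frobM_eq_sqrt_re_trace, frobM_eq_sqrt_re_trace,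
    conjTranspose_mul_self_unitary_mul_mul_conjTranspose M hU, trace_mul_cycle,
    ← star_eq_conjTranspose, mem_unitaryGroup_iff'.mp hV, Matrix.one_mul]

theorem nuclearNorm_unitary_mul_mul_conjTranspose (M : Matrix (Fin m) (Fin n) ℂ)
    (hU : U ∈ unitaryGroup (Fin m) ℂ) (hV : V ∈ unitaryGroup (Fin n) ℂ) :
    nuclearNorm (U * M * Vᴴ) = nuclearNorm M := by
  have heig := ((isHermitian_conjTranspose_mul_self (U * M * Vᴴ)).eigenvalues_eq_eigenvalues_iff
    (isHermitian_conjTranspose_mul_self M)).mpr (by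
      rw [conjTranspose_mul_self_unitary_mul_mul_conjTranspose M hU,
        charpoly_unitary_mul_mul_conjTranspose _ hV])
  simp only [nuclearNorm, heig]

theorem nuclearNorm_add_mul_frobM_sub_sq_unitary_mul_mul_conjTranspose
    (M S : Matrix (Fin m) (Fin n) ℂ) (c : ℝ) (hU : U ∈ unitaryGroup (Fin m) ℂ)
    (hV : V ∈ unitaryGroup (Fin n) ℂ) :
    nuclearNorm (U * M * Vᴴ) + c * frobM (U * M * Vᴴ - U * S * Vᴴ) ^ 2
      = nuclearNorm M + c * frobM (M - S) ^ 2 := by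
  rw [← Matrix.sub_mul, ← Matrix.mul_sub, nuclearNorm_unitary_mul_mul_conjTranspose _ hU hV,
    frobM_unitary_mul_mul_conjTranspose _ hU hV]

theorem nuclearNorm_of_conjTranspose_mul_self_eq_diagonal {M : Matrix (Fin m) (Fin n) ℂ}
    {d : Fin n → ℝ} (hd : ∀ j, 0 ≤ d j) (hM : Mᴴ * M = diagonal fun j => ((d j ^ 2 : ℝ) : ℂ)) :
    nuclearNorm M = ∑ j, d j := by
  rw [nuclearNorm, IsHermitian.sum_comp_eigenvalues_of_eq_diagonal _ hM]
  simp only [Real.sqrt_sq (hd _)]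

end

section

variable {m n : ℕ} {P : Finset (Fin m × Fin n)}

theorem nuclearNorm_eq_sum_norm_of_support_subset
    (hP₁ : Set.InjOn Prod.fst (P : Set (Fin m × Fin n)))
    (hP₂ : Set.InjOn Prod.snd (P : Set (Fin m × Fin n))) {M : Matrix (Fin m) (Fin n) ℂ}
    (hM : ∀ p ∉ P, M p.1 p.2 = 0) :
    nuclearNorm M = ∑ p ∈ P, ‖M p.1 p.2‖ := by
  have hmem : ∀ i j, M i j ≠ 0 → (i, j) ∈ P := fun i j h => by_contra fun hp => h (hM _ hp)
  have hcol : ∀ j, (Function.support fun i => ‖M i j‖).Subsingleton := fun j i hi i' hi' =>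
    congrArg Prod.fst
      (hP₂ (hmem i j (norm_ne_zero_iff.mp hi)) (hmem i' j (norm_ne_zero_iff.mp hi')) rfl)
  have hdiag : Mᴴ * M = diagonal fun j => (((∑ i, ‖M i j‖) ^ 2 : ℝ) : ℂ) := by
    ext j k
    rw [mul_apply, diagonal_apply]
    split_ifs with hjk
    · subst hjk
      rw [← Fintype.sum_sq_eq_sq_sum_of_support_subsingleton (hcol j)]
      push_cast
      simp only [conjTranspose_apply, RCLike.star_def, Complex.conj_mul']
    · refine Finset.sum_eq_zero fun i _ => ?_
      by_cases hij : M i j = 0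
      · simp [hij]
      by_cases hik : M i k = 0
      · simp [hik]
      exact absurd (congrArg Prod.snd (hP₁ (hmem i j hij) (hmem i k hik) rfl)) hjk
  rw [nuclearNorm_of_conjTranspose_mul_self_eq_diagonal (fun j => by positivity) hdiag,
    Finset.sum_comm, ← Fintype.sum_prod_type']
  exact (Finset.sum_subset (Finset.subset_univ P) fun p _ hp => by simp [hM p hp]).symm

theorem sum_norm_le_nuclearNorm (hP₁ : Set.InjOn Prod.fst (P : Set (Fin m × Fin n)))
    (hP₂ : Set.InjOn Prod.snd (P : Set (Fin m × Fin n))) (Z : Matrix (Fin m) (Fin n) ℂ) :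
    ∑ p ∈ P, ‖Z p.1 p.2‖ ≤ nuclearNorm Z := by
  set hH := isHermitian_conjTranspose_mul_self Z
  set W : Matrix (Fin n) (Fin n) ℂ := (hH.eigenvectorUnitary : Matrix (Fin n) (Fin n) ℂ)
  have hWW : W * Wᴴ = 1 := mem_unitaryGroup_iff.mp hH.eigenvectorUnitary.2
  have hWW' : Wᴴ * W = 1 := mem_unitaryGroup_iff'.mp hH.eigenvectorUnitary.2
  have hZW : ∀ k, ∑ i, ‖(Z * W) i k‖ ^ 2 = hH.eigenvalues k := by
    intro k
    have hdiag : (Z * W)ᴴ * (Z * W) = diagonal (RCLike.ofReal ∘ hH.eigenvalues) := by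
      rw [← hH.conjStarAlgAut_star_eigenvectorUnitary, Unitary.conjStarAlgAut_apply]
      simp [W, Matrix.mul_assoc, star_eq_conjTranspose]
    rw [← re_conjTranspose_mul_self_apply_self, hdiag, diagonal_apply_eq]
    rfl
  have hW : ∀ k, ∑ j, ‖W j k‖ ^ 2 = 1 := fun k => by
    rw [← re_conjTranspose_mul_self_apply_self, hWW', one_apply_eq, Complex.one_re]
  have hentry : ∀ i j, ‖Z i j‖ ≤ ∑ k, ‖(Z * W) i k‖ * ‖W j k‖ := fun i j => by
    conv_lhs => rw [← Matrix.mul_one Z, ← hWW, ← Matrix.mul_assoc, mul_apply]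
    refine (norm_sum_le _ _).trans_eq ?_
    simp [conjTranspose_apply]
  calc ∑ p ∈ P, ‖Z p.1 p.2‖
      ≤ ∑ p ∈ P, ∑ k, ‖(Z * W) p.1 k‖ * ‖W p.2 k‖ := Finset.sum_le_sum fun p _ => hentry _ _
    _ = ∑ k, ∑ p ∈ P, ‖(Z * W) p.1 k‖ * ‖W p.2 k‖ := Finset.sum_comm
    _ ≤ ∑ k, √(∑ i, ‖(Z * W) i k‖ ^ 2) * √(∑ j, ‖W j k‖ ^ 2) := Finset.sum_le_sum fun k _ =>
        Finset.sum_mul_le_sqrt_mul_sqrt_of_injOn hP₁ hP₂ (fun i => ‖(Z * W) i k‖)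
          (fun j => ‖W j k‖)
    _ = nuclearNorm Z := by simp only [hZW, hW, Real.sqrt_one, mul_one, nuclearNorm]

theorem frobM_sq_eq_sum_of_support_subset {M : Matrix (Fin m) (Fin n) ℂ}
    (hM : ∀ p ∉ P, M p.1 p.2 = 0) :
    frobM M ^ 2 = ∑ p ∈ P, ‖M p.1 p.2‖ ^ 2 := by
  rw [frobM_sq]
  exact (Finset.sum_subset (Finset.subset_univ P) fun p _ hp => by simp [hM p hp]).symm

theorem sum_norm_sq_le_frobM_sq (M : Matrix (Fin m) (Fin n) ℂ) :
    ∑ p ∈ P, ‖M p.1 p.2‖ ^ 2 ≤ frobM M ^ 2 := by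
  rw [frobM_sq]
  exact Finset.sum_le_univ_sum_of_nonneg fun _ => by positivity

end

def diagPositions (m n : ℕ) : Finset (Fin m × Fin n) :=
  Finset.univ.filter fun p => (p.1 : ℕ) = p.2

section

variable {m n : ℕ}

theorem mem_diagPositions {p : Fin m × Fin n} : p ∈ diagPositions m n ↔ (p.1 : ℕ) = p.2 := by
  simp [diagPositions]

theorem injOn_fst_diagPositions :
    Set.InjOn Prod.fst (diagPositions m n : Set (Fin m × Fin n)) := fun p hp q hq h => by
  simp_all [mem_diagPositions, Prod.ext_iff, Fin.ext_iff]

theorem injOn_snd_diagPositions :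
    Set.InjOn Prod.snd (diagPositions m n : Set (Fin m × Fin n)) := fun p hp q hq h => by
  simp_all [mem_diagPositions, Prod.ext_iff, Fin.ext_iff]

end

theorem soft_thresholding_le_of_nonneg {s τ t : ℝ} (hτ : 0 < τ) (ht : 0 ≤ t) :
    max (s - τ) 0 + 1 / (2 * τ) * (max (s - τ) 0 - s) ^ 2 ≤ t + 1 / (2 * τ) * (t - s) ^ 2 := by
  rcases le_or_gt s τ with hs | hs
  · rw [max_eq_right (by linarith), ← sub_nonneg]
    field_simp
    nlinarith [mul_nonneg ht (by linarith : 0 ≤ 2 * (τ - s) + t)]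
  · rw [max_eq_left (by linarith), ← sub_nonneg]
    field_simp
    nlinarith [sq_nonneg (t - s + τ)]

theorem soft_thresholding_le {s τ : ℝ} (hs : 0 ≤ s) (hτ : 0 < τ) (z : ℂ) :
    ‖((max (s - τ) 0 : ℝ) : ℂ)‖ + 1 / (2 * τ) * ‖((max (s - τ) 0 : ℝ) : ℂ) - s‖ ^ 2
      ≤ ‖z‖ + 1 / (2 * τ) * ‖z - s‖ ^ 2 := by
  have hdist : (‖z‖ - s) ^ 2 ≤ ‖z - s‖ ^ 2 := by
    simpa [Complex.norm_real, abs_of_nonneg hs, sq_abs] using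
      pow_le_pow_left₀ (abs_nonneg _) (abs_norm_sub_norm_le z (s : ℂ)) 2
  rw [← Complex.ofReal_sub, Complex.norm_real, Complex.norm_real,
    Real.norm_of_nonneg (le_max_right _ _), Real.norm_eq_abs, sq_abs]
  calc _ ≤ ‖z‖ + 1 / (2 * τ) * (‖z‖ - s) ^ 2 :=
        soft_thresholding_le_of_nonneg hτ (norm_nonneg z)
    _ ≤ _ := by gcongr

theorem svt_minimizer_general {m n : ℕ} (A : Matrix (Fin m) (Fin n) ℂ)
    (U : Matrix (Fin m) (Fin m) ℂ) (V : Matrix (Fin n) (Fin n) ℂ)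
    (hU : U ∈ Matrix.unitaryGroup (Fin m) ℂ) (hV : V ∈ Matrix.unitaryGroup (Fin n) ℂ)
    (σ : ℕ → ℝ) (hσ : ∀ i, 0 ≤ σ i)
    (Sg : Matrix (Fin m) (Fin n) ℂ)
    (hSg : ∀ i j, Sg i j = if (i : ℕ) = (j : ℕ) then ((σ (i : ℕ) : ℝ) : ℂ) else 0)
    (hA : A = U * Sg * Vᴴ)
    (τ : ℝ) (hτ : 0 < τ)
    (D : Matrix (Fin m) (Fin n) ℂ)
    (hD : ∀ i j, D i j = if (i : ℕ) = (j : ℕ) then ((max (σ (i : ℕ) - τ) 0 : ℝ) : ℂ) else 0) :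
    ∀ Y : Matrix (Fin m) (Fin n) ℂ,
      nuclearNorm (U * D * Vᴴ) + 1 / (2 * τ) * frobM (U * D * Vᴴ - A) ^ 2
        ≤ nuclearNorm Y + 1 / (2 * τ) * frobM (Y - A) ^ 2 := by
  intro Y
  have hY : Y = U * (Uᴴ * Y * V) * Vᴴ := by
    simp only [← Matrix.mul_assoc, ← star_eq_conjTranspose, mem_unitaryGroup_iff.mp hU,
      Matrix.one_mul]
    rw [Matrix.mul_assoc, mem_unitaryGroup_iff.mp hV, Matrix.mul_one]
  have hDP : ∀ p ∉ diagPositions m n, D p.1 p.2 = 0 := fun p hp => by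
    simp_all [mem_diagPositions]
  have hDSgP : ∀ p ∉ diagPositions m n, (D - Sg) p.1 p.2 = 0 := fun p hp => by
    simp_all [mem_diagPositions]
  rw [hA, hY, nuclearNorm_add_mul_frobM_sub_sq_unitary_mul_mul_conjTranspose _ _ _ hU hV,
    nuclearNorm_add_mul_frobM_sub_sq_unitary_mul_mul_conjTranspose _ _ _ hU hV,
    nuclearNorm_eq_sum_norm_of_support_subset injOn_fst_diagPositions injOn_snd_diagPositions
      hDP,
    frobM_sq_eq_sum_of_support_subset hDSgP, Finset.mul_sum, ← Finset.sum_add_distrib]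
  set Z := Uᴴ * Y * V
  calc ∑ p ∈ diagPositions m n, (‖D p.1 p.2‖ + 1 / (2 * τ) * ‖(D - Sg) p.1 p.2‖ ^ 2)
      ≤ ∑ p ∈ diagPositions m n, (‖Z p.1 p.2‖ + 1 / (2 * τ) * ‖(Z - Sg) p.1 p.2‖ ^ 2) :=
        Finset.sum_le_sum fun p hp => by
          have hdiag : (p.1 : ℕ) = p.2 := mem_diagPositions.mp hp
          simpa [hD, hSg, hdiag] using soft_thresholding_le (hσ p.1) hτ (Z p.1 p.2)
    _ ≤ nuclearNorm Z + 1 / (2 * τ) * frobM (Z - Sg) ^ 2 := by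
        rw [Finset.sum_add_distrib, ← Finset.mul_sum]
        gcongr
        · exact sum_norm_le_nuclearNorm injOn_fst_diagPositions injOn_snd_diagPositions Z
        · exact sum_norm_sq_le_frobM_sq _

/-- matrix singular value thresholding: if `A = U Σ Vᴴ` is an SVD of `A`
with nonincreasing nonnegative singular values `σ`, and `τ > 0`, then `Y* = U D Vᴴ`, where
`D` has diagonal entries `max (σ i - τ) 0`, globally minimizes
`Y ↦ ‖Y‖_* + (1/(2τ))·‖Y − A‖_F²`. -/
theorem svt_minimizer {m n : ℕ} (A : Matrix (Fin m) (Fin n) ℂ)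
    (U : Matrix (Fin m) (Fin m) ℂ) (V : Matrix (Fin n) (Fin n) ℂ)
    (hU : U ∈ Matrix.unitaryGroup (Fin m) ℂ) (hV : V ∈ Matrix.unitaryGroup (Fin n) ℂ)
    (σ : ℕ → ℝ) (hσ : ∀ i, 0 ≤ σ i) (hσmono : ∀ i j, i ≤ j → σ j ≤ σ i)
    (Sg : Matrix (Fin m) (Fin n) ℂ)
    (hSg : ∀ i j, Sg i j = if (i : ℕ) = (j : ℕ) then ((σ (i : ℕ) : ℝ) : ℂ) else 0)
    (hA : A = U * Sg * Vᴴ)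
    (τ : ℝ) (hτ : 0 < τ)
    (D : Matrix (Fin m) (Fin n) ℂ)
    (hD : ∀ i j, D i j = if (i : ℕ) = (j : ℕ) then ((max (σ (i : ℕ) - τ) 0 : ℝ) : ℂ) else 0) :
    ∀ Y : Matrix (Fin m) (Fin n) ℂ,
      nuclearNorm (U * D * Vᴴ) + 1 / (2 * τ) * frobM (U * D * Vᴴ - A) ^ 2
        ≤ nuclearNorm Y + 1 / (2 * τ) * frobM (Y - A) ^ 2 :=
  svt_minimizer_general A U V hU hV σ hσ Sg hSg hA τ hτ D hD
end
end

section
/- The TNN proximal problem separates over Fourier-domain frontal slices: for an n1 × n2 × n3 tensor A and β > 0, a tensor Y minimizes ‖Y‖_TNN + (β/2)‖A − Y‖_F² over all n1 × n2 × n3 tensors if and only if, for every k, the k-th frontal slice Ȳ^(k) of the mode-3 DFT of Y minimizes the function M ↦ ‖M‖_* + (β/(2·n3))·‖Ā^(k) − M‖_F² over ℂ^{n1×n2}. -/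
open Matrix
open scoped BigOperators ComplexConjugate

noncomputable section

/-!
By Parseval's identity for the DFT, `‖X‖_F² = (1/n3) Σ_k ‖X̄⁽ᵏ⁾‖_F²`, so the TNN proximal
objective of `W` is `Σ_k f_k (W̄⁽ᵏ⁾)` with `f_k` the slice objective. Since the mode-3 DFT is
invertible, the family of slices `(W̄⁽ᵏ⁾)_k` ranges over all families of matrices, and a sum of
functions of independent variables is minimized exactly when each summand is.
-/

open scoped ZMod

lemma Fintype.forall_sum_le_sum_iff_forall_le {ι α β : Type*} [Fintype ι] [DecidableEq ι]
    [AddCommMonoid β] [PartialOrder β] [IsOrderedCancelAddMonoid β]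
    (f : ι → α → β) (v : ι → α) :
    (∀ w : ι → α, ∑ k, f k (v k) ≤ ∑ k, f k (w k)) ↔ ∀ k a, f k (v k) ≤ f k a := by
  refine ⟨fun h k a => ?_, fun h w => Finset.sum_le_sum fun k _ => h k (w k)⟩
  have := h (Function.update v k a)
  rwa [Finset.sum_congr rfl fun j _ => Function.apply_update f v k a j,
    Finset.sum_update_of_mem (Finset.mem_univ k), ← Finset.compl_eq_univ_sdiff,
    Fintype.sum_eq_add_sum_compl k, add_le_add_iff_right] at this

lemma Complex.exp_neg_two_pi_I_div_pow_val {N : ℕ} [NeZero N] (j : ZMod N) :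
    Complex.exp (-(2 * Real.pi * Complex.I) / N) ^ j.val = ZMod.stdAddChar (-j) := by
  rw [AddChar.map_neg_eq_inv, ZMod.stdAddChar_apply, ZMod.toCircle_apply, ← Complex.exp_nat_mul,
    ← Complex.exp_neg]
  congr 1
  ring

lemma ZMod.sum_stdAddChar_mul_conj {N : ℕ} [NeZero N] (j l : ZMod N) :
    ∑ k, stdAddChar (j * k) * conj (stdAddChar (l * k)) = if j = l then (N : ℂ) else 0 := by
  convert AddChar.sum_mulShift (j - l) (isPrimitive_stdAddChar N) using 1
  · refine Finset.sum_congr rfl fun k _ => ?_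
    rw [← AddChar.map_neg_eq_conj, ← AddChar.map_add_eq_mul]
    ring_nf
  · simp [sub_eq_zero]

lemma ZMod.sum_norm_sq_dft {N : ℕ} [NeZero N] (x : ZMod N → ℂ) :
    ∑ k, ‖𝓕 x k‖ ^ 2 = N * ∑ j, ‖x j‖ ^ 2 := by
  have key : ∑ k, 𝓕 x k * conj (𝓕 x k) = N * ∑ j, x j * conj (x j) :=
    calc ∑ k, 𝓕 x k * conj (𝓕 x k)
        = ∑ j, ∑ l, x j * conj (x l) * ∑ k, stdAddChar (-j * k) * conj (stdAddChar (-l * k)) := by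
          simp_rw [ZMod.dft_apply, smul_eq_mul, map_sum, map_mul, Finset.sum_mul_sum,
            Finset.mul_sum]
          rw [Finset.sum_comm]
          refine Finset.sum_congr rfl fun j _ => Finset.sum_comm.trans ?_
          refine Finset.sum_congr rfl fun l _ => Finset.sum_congr rfl fun k _ => ?_
          ring_nf
      _ = N * ∑ j, x j * conj (x j) := by
          simp_rw [sum_stdAddChar_mul_conj, neg_inj, mul_ite, mul_zero, Finset.sum_ite_eq,
            Finset.mem_univ, if_true, Finset.mul_sum, mul_comm]
  have : ∑ k, (‖𝓕 x k‖ ^ 2 : ℂ) = N * ∑ j, (‖x j‖ ^ 2 : ℂ) := by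
    simpa [Complex.mul_conj, Complex.normSq_eq_norm_sq] using key
  exact_mod_cast this

lemma dft_eq_zmod_dft {N : ℕ} [NeZero N] (x : ZMod N → ℂ) : dft x = 𝓕 x := by
  ext k
  simp_rw [dft, ZMod.dft_apply, Complex.exp_neg_two_pi_I_div_pow_val, smul_eq_mul, mul_comm (x _),
    mul_comm k]

section Tensor

variable {n1 n2 n3 : ℕ}

lemma mdft_apply [NeZero n3] (X : Tensor n1 n2 n3) (i : Fin n1) (j : Fin n2) :
    mdft X i j = 𝓕 (X i j) :=
  dft_eq_zmod_dft _

lemma mdft_sub [NeZero n3] (X Y : Tensor n1 n2 n3) : mdft (X - Y) = mdft X - mdft Y := by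
  ext i j : 2
  simp only [mdft_apply, Pi.sub_apply, map_sub]

lemma fslice_sub (X Y : Tensor n1 n2 n3) (k : ZMod n3) :
    fslice (X - Y) k = fslice X k - fslice Y k :=
  rfl

lemma fslice_mdft_surjective [NeZero n3] :
    Function.Surjective fun (X : Tensor n1 n2 n3) k => fslice (mdft X) k := by
  intro F
  refine ⟨fun i j => 𝓕⁻ fun k => F k i j, ?_⟩
  ext k i j
  simp [fslice, mdft_apply]

lemma frob_sq [NeZero n3] (X : Tensor n1 n2 n3) :
    frob X ^ 2 = ∑ i, ∑ j, ∑ t, ‖X i j t‖ ^ 2 :=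
  Real.sq_sqrt <| by positivity

lemma frobM_sq_s11 (M : Matrix (Fin n1) (Fin n2) ℂ) : frobM M ^ 2 = ∑ i, ∑ j, ‖M i j‖ ^ 2 :=
  Real.sq_sqrt <| by positivity

lemma sum_frobM_fslice_mdft_sq [NeZero n3] (X : Tensor n1 n2 n3) :
    ∑ k, frobM (fslice (mdft X) k) ^ 2 = n3 * frob X ^ 2 := by
  simp_rw [frobM_sq_s11, frob_sq, fslice, Matrix.of_apply, mdft_apply]
  rw [Finset.sum_comm]
  simp_rw [Finset.sum_comm (γ := ZMod n3), ZMod.sum_norm_sq_dft, Finset.mul_sum]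

lemma tnn_add_frob_sq_eq_sum [NeZero n3] (A W : Tensor n1 n2 n3) (β : ℝ) :
    tnn W + β / 2 * frob (A - W) ^ 2
      = ∑ k, (nuclearNorm (fslice (mdft W) k)
          + β / (2 * n3) * frobM (fslice (mdft A) k - fslice (mdft W) k) ^ 2) := by
  have hn3 : (n3 : ℝ) ≠ 0 := Nat.cast_ne_zero.mpr (NeZero.ne n3)
  simp_rw [Finset.sum_add_distrib, ← Finset.mul_sum, ← fslice_sub, ← mdft_sub,
    sum_frobM_fslice_mdft_sq, tnn]
  field_simp

end Tensor

theorem tnn_prox_separates_general {n1 n2 n3 : ℕ} [NeZero n3]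
    (A : Tensor n1 n2 n3) (β : ℝ) (Y : Tensor n1 n2 n3) :
    (∀ W : Tensor n1 n2 n3,
        tnn Y + β / 2 * frob (A - Y) ^ 2 ≤ tnn W + β / 2 * frob (A - W) ^ 2)
    ↔ (∀ (k : ZMod n3) (M : Matrix (Fin n1) (Fin n2) ℂ),
        nuclearNorm (fslice (mdft Y) k)
            + β / (2 * n3) * frobM (fslice (mdft A) k - fslice (mdft Y) k) ^ 2
          ≤ nuclearNorm M + β / (2 * n3) * frobM (fslice (mdft A) k - M) ^ 2) := by
  simp_rw [tnn_add_frob_sq_eq_sum A _ β]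
  exact fslice_mdft_surjective.forall.symm.trans <| Fintype.forall_sum_le_sum_iff_forall_le
    (fun k M => nuclearNorm M + β / (2 * n3) * frobM (fslice (mdft A) k - M) ^ 2) _

/-- the TNN proximal problem separates over Fourier-domain frontal slices:
`Y` minimizes `‖·‖_TNN + (β/2)‖A − ·‖_F²` iff for every `k` the slice `Ȳ⁽ᵏ⁾` minimizes
`M ↦ ‖M‖_* + (β/(2·n3))‖Ā⁽ᵏ⁾ − M‖_F²`. -/
theorem tnn_prox_separates {n1 n2 n3 : ℕ} [NeZero n3]
    (A : Tensor n1 n2 n3) (β : ℝ) (hβ : 0 < β) (Y : Tensor n1 n2 n3) :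
    (∀ W : Tensor n1 n2 n3,
        tnn Y + β / 2 * frob (A - Y) ^ 2 ≤ tnn W + β / 2 * frob (A - W) ^ 2)
    ↔ (∀ (k : ZMod n3) (M : Matrix (Fin n1) (Fin n2) ℂ),
        nuclearNorm (fslice (mdft Y) k)
            + β / (2 * n3) * frobM (fslice (mdft A) k - fslice (mdft Y) k) ^ 2
          ≤ nuclearNorm M + β / (2 * n3) * frobM (fslice (mdft A) k - M) ^ 2) :=
  tnn_prox_separates_general A β Y

end
end
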